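/- Vector solution filtering theorem: let F₀ ⊆ F contain kρ², p, q, r ∈ ℕ, and define r_{p×q}(K) = { K₂ ⊗ j₂ + K₃ ⊗ j₃ : K₂, K₃ ∈ K^{p×q} } and m_{p×q}(K) = r_{p×q}(K) ⊕ { K₇ ⊗ j₇ : K₇ ∈ K^{p×q} }, with j₂ = (0,0,1)ᵀ, j₃ = (i·kx,i·ky,0)ᵀ, j₇ = (i·ky,−i·kx,0)ᵀ. If Ā ∈ R_{p×r}(F₀), X̄ ∈ m_{r×q}(F), and B̄ ∈ r_{p×q}(F₀) satisfy Ā·X̄ = B̄, then there exists X̄₀ ∈ r_{r×q}(F₀) with Ā·X̄₀ = B̄. -/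

import Mathlib

open Matrix Kronecker MvPolynomial

noncomputable section

/-- The nine matrices of the matrix basis; index `j : Fin 9` is `J_{j+1}`. -/
def Jm {R : Type*} [CommRing R] (kx ky i : R) : Fin 9 → Matrix (Fin 3) (Fin 3) R :=
  ![!![1,0,0; 0,1,0; 0,0,0],
    !![0,0,0; 0,0,0; 0,0,1],
    !![0,0,i*kx; 0,0,i*ky; 0,0,0],
    !![0,0,0; 0,0,0; i*kx,i*ky,0],
    !![-kx^2,-(kx*ky),0; -(kx*ky),-ky^2,0; 0,0,0],
    !![0,0,0; 0,0,0; -(i*ky),i*kx,0],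
    !![0,0,i*ky; 0,0,-(i*kx); 0,0,0],
    !![kx*ky,ky^2,0; -kx^2,-(kx*ky),0; 0,0,0],
    !![0,1,0; -1,0,0; 0,0,0]]

/-- The field `F = ℂ(kx, ky)` of rational functions in two indeterminates. -/
abbrev Fld : Type := FractionRing (MvPolynomial (Fin 2) ℂ)

def kxF : Fld := algebraMap (MvPolynomial (Fin 2) ℂ) Fld (X 0)
def kyF : Fld := algebraMap (MvPolynomial (Fin 2) ℂ) Fld (X 1)
def iF : Fld := algebraMap (MvPolynomial (Fin 2) ℂ) Fld (C Complex.I)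

/-- The column vectors `j₂ = (0,0,1)ᵀ`, `j₃ = (i kx, i ky, 0)ᵀ`,
`j₇ = (i ky, −i kx, 0)ᵀ` as `3 × 1` matrices. -/
def j2m : Matrix (Fin 3) (Fin 1) Fld := !![0; 0; 1]
def j3m : Matrix (Fin 3) (Fin 1) Fld := !![iF*kxF; iF*kyF; 0]
def j7m : Matrix (Fin 3) (Fin 1) Fld := !![iF*kyF; -(iF*kxF); 0]

/-- `R_{p×r}(K)`: block matrices `Σ_{j=1}^{5} A_j ⊗ J_j` with entries in `K`. -/
def inBlockR (K : Subfield Fld) {p q : ℕ}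
    (M : Matrix (Fin p × Fin 3) (Fin q × Fin 3) Fld) : Prop :=
  ∃ Ks : Fin 5 → Matrix (Fin p) (Fin q) Fld,
    (∀ j u v, Ks j u v ∈ K) ∧
    M = ∑ j : Fin 5, (Ks j) ⊗ₖ Jm kxF kyF iF (Fin.castLE (by norm_num) j)

/-- `r_{p×q}(K)`: block column matrices `K₂ ⊗ j₂ + K₃ ⊗ j₃` with entries in `K`. -/
def inBlockRvec (K : Subfield Fld) {p q : ℕ}
    (M : Matrix (Fin p × Fin 3) (Fin q × Fin 1) Fld) : Prop :=
  ∃ K2 K3 : Matrix (Fin p) (Fin q) Fld,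
    (∀ u v, K2 u v ∈ K) ∧ (∀ u v, K3 u v ∈ K) ∧
    M = K2 ⊗ₖ j2m + K3 ⊗ₖ j3m

/-- `m_{p×q}(F)`: block column matrices `K₂ ⊗ j₂ + K₃ ⊗ j₃ + K₇ ⊗ j₇`
with coefficients in the whole field `F`. -/
def inBlockMvec {p q : ℕ}
    (M : Matrix (Fin p × Fin 3) (Fin q × Fin 1) Fld) : Prop :=
  ∃ K2 K3 K7 : Matrix (Fin p) (Fin q) Fld,
    M = K2 ⊗ₖ j2m + K3 ⊗ₖ j3m + K7 ⊗ₖ j7m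

/-! `Ā X̄` decomposes along the independent vectors `j₂, j₃, j₇`: since every `J_j` maps `j₂` and
`j₃` into their span and `j₇` into its own line, the `j₂`- and `j₃`-components of `Ā X̄` only involve
the `j₂`- and `j₃`-coefficients `X₂, X₃` of `X̄`, through matrices with entries in `F₀` (built from
the `A_j` and `kρ²`). So `Ā X̄ = B̄` contains a linear system over `F₀` for `(X₂, X₃)` with
right-hand side in `F₀`, and an `F₀`-linear retraction `F → F₀`, applied entrywise, turns its
solution into one with entries in `F₀`. -/

theorem Subfield.exists_linearMap_retraction {L : Type*} [Field L] (K : Subfield L) :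
    ∃ ρ : L →ₗ[K] L, (∀ x ∈ K, ρ x = x) ∧ ∀ x, ρ x ∈ K := by
  obtain ⟨π, hπ⟩ := (Algebra.linearMap K L).exists_leftInverse_of_injective
    (LinearMap.ker_eq_bot.2 (algebraMap K L).injective)
  exact ⟨Algebra.linearMap K L ∘ₗ π,
    fun x hx => congrArg Subtype.val (LinearMap.congr_fun hπ ⟨x, hx⟩), fun x => (π x).2⟩

namespace Matrix

variable {L : Type*} [Field L] {K : Subfield L} {ρ : L →ₗ[K] L} {m n o : Type*}

lemma map_linearMap_mul_of_mem [Fintype n] {M : Matrix m n L} (hM : ∀ i j, M i j ∈ K)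
    (N : Matrix n o L) : (M * N).map ρ = M * N.map ρ := by
  ext i k
  simp only [map_apply, mul_apply, map_sum]
  exact Finset.sum_congr rfl fun j _ => ρ.map_smul ⟨M i j, hM i j⟩ (N j k)

lemma map_eq_self_of_mem (hρ : ∀ x ∈ K, ρ x = x) {M : Matrix m n L} (hM : ∀ i j, M i j ∈ K) :
    M.map ρ = M :=
  ext fun i j => hρ _ (hM i j)

lemma add_mul_map_eq_of_mem [Fintype n] (hρ : ∀ x ∈ K, ρ x = x) {P Q : Matrix m n L}
    {X Y : Matrix n o L} {B : Matrix m o L} (hP : ∀ i j, P i j ∈ K) (hQ : ∀ i j, Q i j ∈ K)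
    (hB : ∀ i j, B i j ∈ K) (h : P * X + Q * Y = B) : P * X.map ρ + Q * Y.map ρ = B := by
  have := congrArg (map · ρ) h
  rwa [Matrix.map_add _ (_root_.map_add ρ), map_linearMap_mul_of_mem hP,
    map_linearMap_mul_of_mem hQ, map_eq_self_of_mem hρ hB] at this

end Matrix

lemma iF_mul_iF : iF * iF = -1 := by
  rw [iF, ← _root_.map_mul, ← C_mul, Complex.I_mul_I, C_neg, C_1, map_neg, _root_.map_one]

lemma iF_ne_zero : iF ≠ 0 := fun h => by simpa [h] using iF_mul_iF

lemma kxF_sq_add_kyF_sq_ne_zero : kxF ^ 2 + kyF ^ 2 ≠ 0 := by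
  rw [kxF, kyF, ← map_pow, ← map_pow, ← _root_.map_add, ne_eq,
    IsFractionRing.to_map_eq_zero_iff (K := Fld)]
  intro h
  simpa using congrArg (eval ![1, 0]) h

local notation "J" n => Jm kxF kyF iF n

lemma Jm_zero_mul_j2m : (J 0) * j2m = 0 := by
  ext a b; fin_cases a <;> fin_cases b <;> simp [Jm, j2m, mul_apply, Fin.sum_univ_three]
lemma Jm_zero_mul_j3m : (J 0) * j3m = j3m := by
  ext a b; fin_cases a <;> fin_cases b <;> simp [Jm, j3m, mul_apply, Fin.sum_univ_three]
lemma Jm_zero_mul_j7m : (J 0) * j7m = j7m := by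
  ext a b; fin_cases a <;> fin_cases b <;> simp [Jm, j7m, mul_apply, Fin.sum_univ_three]
lemma Jm_one_mul_j2m : (J 1) * j2m = j2m := by
  ext a b; fin_cases a <;> fin_cases b <;> simp [Jm, j2m, mul_apply, Fin.sum_univ_three]
lemma Jm_one_mul_j3m : (J 1) * j3m = 0 := by
  ext a b; fin_cases a <;> fin_cases b <;> simp [Jm, j3m, mul_apply, Fin.sum_univ_three]
lemma Jm_one_mul_j7m : (J 1) * j7m = 0 := by
  ext a b; fin_cases a <;> fin_cases b <;> simp [Jm, j7m, mul_apply, Fin.sum_univ_three]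
lemma Jm_two_mul_j2m : (J 2) * j2m = j3m := by
  ext a b; fin_cases a <;> fin_cases b <;> simp [Jm, j2m, j3m, mul_apply, Fin.sum_univ_three]
lemma Jm_two_mul_j3m : (J 2) * j3m = 0 := by
  ext a b; fin_cases a <;> fin_cases b <;> simp [Jm, j3m, mul_apply, Fin.sum_univ_three]
lemma Jm_two_mul_j7m : (J 2) * j7m = 0 := by
  ext a b; fin_cases a <;> fin_cases b <;> simp [Jm, j7m, mul_apply, Fin.sum_univ_three]
lemma Jm_three_mul_j2m : (J 3) * j2m = 0 := by
  ext a b; fin_cases a <;> fin_cases b <;> simp [Jm, j2m, mul_apply, Fin.sum_univ_three]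
lemma Jm_three_mul_j3m : (J 3) * j3m = (-(kxF ^ 2 + kyF ^ 2)) • j2m := by
  ext a b; fin_cases a <;> fin_cases b <;> simp [Jm, j2m, j3m, mul_apply, Fin.sum_univ_three]
  linear_combination (kxF ^ 2 + kyF ^ 2) * iF_mul_iF
lemma Jm_three_mul_j7m : (J 3) * j7m = 0 := by
  ext a b; fin_cases a <;> fin_cases b <;> simp [Jm, j7m, mul_apply, Fin.sum_univ_three]; ring
lemma Jm_four_mul_j2m : (J 4) * j2m = 0 := by
  ext a b; fin_cases a <;> fin_cases b <;> simp [Jm, j2m, mul_apply, Fin.sum_univ_three]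
lemma Jm_four_mul_j3m : (J 4) * j3m = (-(kxF ^ 2 + kyF ^ 2)) • j3m := by
  ext a b; fin_cases a <;> fin_cases b <;> simp [Jm, j3m, mul_apply, Fin.sum_univ_three] <;> ring
lemma Jm_four_mul_j7m : (J 4) * j7m = 0 := by
  ext a b; fin_cases a <;> fin_cases b <;> simp [Jm, j7m, mul_apply, Fin.sum_univ_three] <;> ring

section Blocks

variable {l m n : Type*}

lemma sum_kronecker_Jm_eq (Ks : Fin 5 → Matrix l m Fld) :
    ∑ j : Fin 5, Ks j ⊗ₖ Jm kxF kyF iF (Fin.castLE (by norm_num) j) =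
      Ks 0 ⊗ₖ (J 0) + Ks 1 ⊗ₖ (J 1) + Ks 2 ⊗ₖ (J 2) + Ks 3 ⊗ₖ (J 3) + Ks 4 ⊗ₖ (J 4) := by
  rw [Fin.sum_univ_five]
  rfl

lemma blockR_mul_blockRvec [Fintype m] (Ks : Fin 5 → Matrix l m Fld) (X2 X3 : Matrix m n Fld) :
    (∑ j : Fin 5, Ks j ⊗ₖ Jm kxF kyF iF (Fin.castLE (by norm_num) j)) *
        (X2 ⊗ₖ j2m + X3 ⊗ₖ j3m) =
      (Ks 1 * X2 + (-(kxF ^ 2 + kyF ^ 2)) • Ks 3 * X3) ⊗ₖ j2m +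
        (Ks 2 * X2 + (Ks 0 + (-(kxF ^ 2 + kyF ^ 2)) • Ks 4) * X3) ⊗ₖ j3m := by
  simp only [sum_kronecker_Jm_eq, Matrix.add_mul, Matrix.mul_add, ← mul_kronecker_mul,
    Jm_zero_mul_j2m, Jm_zero_mul_j3m, Jm_one_mul_j2m, Jm_one_mul_j3m, Jm_two_mul_j2m,
    Jm_two_mul_j3m, Jm_three_mul_j2m, Jm_three_mul_j3m, Jm_four_mul_j2m, Jm_four_mul_j3m,
    kronecker_zero, kronecker_smul, smul_kronecker, add_kronecker, Matrix.add_mul, Matrix.smul_mul]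
  abel

lemma blockR_mul_kronecker_j7m [Fintype m] (Ks : Fin 5 → Matrix l m Fld) (X7 : Matrix m n Fld) :
    (∑ j : Fin 5, Ks j ⊗ₖ Jm kxF kyF iF (Fin.castLE (by norm_num) j)) * (X7 ⊗ₖ j7m) =
      (Ks 0 * X7) ⊗ₖ j7m := by
  simp only [sum_kronecker_Jm_eq, Matrix.add_mul, ← mul_kronecker_mul, Jm_zero_mul_j7m,
    Jm_one_mul_j7m, Jm_two_mul_j7m, Jm_three_mul_j7m, Jm_four_mul_j7m, kronecker_zero, add_zero]

end Blocks

lemma kronecker_j_coeffs_eq {m n : Type*} {C2 C3 C7 D2 D3 : Matrix m n Fld}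
    (h : C2 ⊗ₖ j2m + C3 ⊗ₖ j3m + C7 ⊗ₖ j7m = D2 ⊗ₖ j2m + D3 ⊗ₖ j3m) :
    C2 = D2 ∧ C3 = D3 := by
  refine ⟨ext fun u v => ?_, ext fun u v => ?_⟩
  · simpa [j2m, j3m, j7m] using congrFun (congrFun h (u, 2)) (v, 0)
  · have h0 := congrFun (congrFun h (u, 0)) (v, 0)
    have h1 := congrFun (congrFun h (u, 1)) (v, 0)
    simp only [j2m, j3m, j7m, Matrix.add_apply, kroneckerMap_apply, of_apply, cons_val',
      cons_val_fin_one, cons_val_zero, mul_zero, zero_add, cons_val_one, mul_neg] at h0 h1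
    -- `kx · h0 + ky · h1` eliminates the `j₇`-coefficient and leaves `i kρ² (C₃ - D₃)`.
    have hs : (C3 u v - D3 u v) * (iF * (kxF ^ 2 + kyF ^ 2)) = 0 := by
      linear_combination kxF * h0 + kyF * h1
    simpa [sub_eq_zero, iF_ne_zero, kxF_sq_add_kyF_sq_ne_zero] using hs

/-- vector solution filtering: if `Ā ∈ R_{p×r}(F₀)`,
`X̄ ∈ m_{r×q}(F)`, `B̄ ∈ r_{p×q}(F₀)` and `Ā·X̄ = B̄`, then there exists
`X̄₀ ∈ r_{r×q}(F₀)` with `Ā·X̄₀ = B̄`. -/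
theorem vector_solution_filtering (F₀ : Subfield Fld)
    (hF₀ : kxF^2 + kyF^2 ∈ F₀) (p q r : ℕ)
    (A : Matrix (Fin p × Fin 3) (Fin r × Fin 3) Fld)
    (Xv : Matrix (Fin r × Fin 3) (Fin q × Fin 1) Fld)
    (B : Matrix (Fin p × Fin 3) (Fin q × Fin 1) Fld)
    (hA : inBlockR F₀ A) (hX : inBlockMvec Xv) (hB : inBlockRvec F₀ B)
    (hAXB : A * Xv = B) :
    ∃ X₀ : Matrix (Fin r × Fin 3) (Fin q × Fin 1) Fld,
      inBlockRvec F₀ X₀ ∧ A * X₀ = B := by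
  obtain ⟨Ks, hKs, rfl⟩ := hA
  obtain ⟨X2, X3, X7, rfl⟩ := hX
  obtain ⟨B2, B3, hB2, hB3, rfl⟩ := hB
  rw [Matrix.mul_add, blockR_mul_blockRvec, blockR_mul_kronecker_j7m] at hAXB
  obtain ⟨h2, h3⟩ := kronecker_j_coeffs_eq hAXB
  obtain ⟨ρ, hρK, hρ⟩ := F₀.exists_linearMap_retraction
  refine ⟨X2.map ρ ⊗ₖ j2m + X3.map ρ ⊗ₖ j3m, ⟨_, _, fun _ _ => hρ _, fun _ _ => hρ _, rfl⟩, ?_⟩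
  have hQ2 : ∀ i j, ((-(kxF ^ 2 + kyF ^ 2)) • Ks 3) i j ∈ F₀ :=
    fun i j => mul_mem (neg_mem hF₀) (hKs 3 i j)
  have hQ3 : ∀ i j, (Ks 0 + (-(kxF ^ 2 + kyF ^ 2)) • Ks 4) i j ∈ F₀ :=
    fun i j => add_mem (hKs 0 i j) (mul_mem (neg_mem hF₀) (hKs 4 i j))
  rw [blockR_mul_blockRvec, add_mul_map_eq_of_mem hρK (hKs 1) hQ2 hB2 h2,
    add_mul_map_eq_of_mem hρK (hKs 2) hQ3 hB3 h3]
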